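/- Let G = ℤ^r ⊕ F where F is a finite group, and let φ : G → G be an endomorphism. Then φ(F) ⊆ F (F being the set of torsion elements of G); let φ^finite : F → F be the restriction of φ and let φ^∞ be the induced endomorphism of G/F ≅ ℤ^r, given by an integer matrix M. If det(I − M) ≠ 0, then R(φ) = R(φ^finite) · R(φ^∞) = R(φ^finite) · |det(I − M)|. -/

import Mathlib

/-- The set of Reidemeister (`φ`-twisted conjugacy) classes of an endomorphism `φ` of a
group `G`: `α'` is `φ`-conjugate to `α` iff `α' = γ * α * (φ γ)⁻¹` for some `γ ∈ G`. -/
def ReidemeisterSet {G : Type*} [Group G] (φ : G →* G) : Type _ :=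
  Quot (fun a b : G => ∃ γ : G, b = γ * a * (φ γ)⁻¹)

/-- The set of Reidemeister classes of the endomorphism `v ↦ M.mulVec v` of `ℤʳ` (written
additively): `w` is conjugate to `v` iff `w = u + v − M.mulVec u` for some `u`. -/
def intMatrixReidemeisterSet {r : ℕ} (M : Matrix (Fin r) (Fin r) ℤ) : Type :=
  Quot (fun v w : Fin r → ℤ => ∃ u : Fin r → ℤ, w = u + v - M.mulVec u)

/-! Projecting `A × F` onto `A` maps the Reidemeister classes of `φ` onto those of the induced
endomorphism `m` of `A`, and the fibre over the class of `a` consists of the classes of the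
pairs `(a, f)`. Twisted conjugation by `(c, γ)` fixes the first coordinate `a` of such a pair
exactly when `c = m c`, so when `m` fixes only `1` it acts on the fibre through `γ` alone, and
the fibre is a copy of `R(ψ)`. For `A = ℤʳ` and `m = M`, the classes of `m` are the cosets of
the image of `1 - M`, whose index is `|det (1 - M)|` (Smith normal form). -/

open Function Matrix

theorem Submodule.natCard_quotient_range_eq_natAbs_det {M : Type*} [AddCommGroup M]
    [Module.Free ℤ M] [Module.Finite ℤ M] {f : M →ₗ[ℤ] M} (hf : Injective f) :
    Nat.card (M ⧸ LinearMap.range f) = (LinearMap.det f).natAbs := by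
  rw [← Submodule.natAbs_det_equiv _ (LinearEquiv.ofInjective f hf)]
  rfl

namespace ReidemeisterSet

variable {G : Type*} [Group G] (φ : G →* G)

def mk (g : G) : ReidemeisterSet φ := Quot.mk _ g

theorem equivalence_twistedConj : Equivalence fun a b : G => ∃ γ : G, b = γ * a * (φ γ)⁻¹ where
  refl a := ⟨1, by simp⟩
  symm := by
    rintro a b ⟨γ, rfl⟩
    exact ⟨γ⁻¹, by simp [mul_assoc]⟩
  trans := by
    rintro a b c ⟨γ, rfl⟩ ⟨δ, rfl⟩
    exact ⟨δ * γ, by simp [mul_assoc]⟩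

variable {φ}

theorem mk_eq_mk_iff {a b : G} : mk φ a = mk φ b ↔ ∃ γ : G, b = γ * a * (φ γ)⁻¹ :=
  (Quot.eq).trans (equivalence_twistedConj φ).eqvGen_iff

theorem mk_surjective : Surjective (mk φ) := Quot.exists_rep

variable {A F : Type*} [CommGroup A] [Group F] {φ : A × F →* A × F} {m : A →* A} {ψ : F →* F}

theorem fst_map (hψ : ∀ f, φ (1, f) = (1, ψ f)) (hm : ∀ a, (φ (a, 1)).1 = m a) (x : A × F) :
    (φ x).1 = m x.1 := by
  conv_lhs => rw [← Prod.fst_mul_snd x, map_mul, Prod.fst_mul, hm, hψ, mul_one]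

variable (m) in
def fstMap (hψ : ∀ f, φ (1, f) = (1, ψ f)) (hm : ∀ a, (φ (a, 1)).1 = m a) :
    ReidemeisterSet φ → ReidemeisterSet m :=
  Quot.map Prod.fst <| by
    rintro x _ ⟨γ, rfl⟩
    exact ⟨γ.1, by simp [fst_map hψ hm]⟩

variable (φ) in
def inclFiber (hψ : ∀ f, φ (1, f) = (1, ψ f)) (a : A) : ReidemeisterSet ψ → ReidemeisterSet φ :=
  Quot.map (fun f => (a, f)) <| by
    rintro f _ ⟨γ, rfl⟩
    exact ⟨(1, γ), by simp [hψ]⟩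

theorem fstMap_inclFiber (hψ : ∀ f, φ (1, f) = (1, ψ f)) (hm : ∀ a, (φ (a, 1)).1 = m a) (a : A)
    (y : ReidemeisterSet ψ) : fstMap m hψ hm (inclFiber φ hψ a y) = mk m a := by
  obtain ⟨f, rfl⟩ := mk_surjective y
  rfl

theorem inclFiber_injective (hψ : ∀ f, φ (1, f) = (1, ψ f)) (hm : ∀ a, (φ (a, 1)).1 = m a)
    (hfix : ∀ c, m c = c → c = 1) (a : A) : Injective (inclFiber φ hψ a) := by
  intro y z h
  obtain ⟨f, rfl⟩ := mk_surjective y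
  obtain ⟨g, rfl⟩ := mk_surjective z
  obtain ⟨⟨c, γ⟩, h⟩ := mk_eq_mk_iff.mp h
  have hc : c = 1 := by
    refine hfix c (Eq.symm ?_)
    have := congrArg Prod.fst h
    simp only [Prod.fst_mul, Prod.fst_inv, fst_map hψ hm] at this
    rwa [mul_comm c a, mul_assoc, left_eq_mul, mul_inv_eq_one] at this
  subst hc
  simp only [hψ, Prod.ext_iff] at h
  exact mk_eq_mk_iff.mpr ⟨γ, by simpa using h.2⟩

theorem range_inclFiber (hψ : ∀ f, φ (1, f) = (1, ψ f)) (hm : ∀ a, (φ (a, 1)).1 = m a) (a : A) :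
    Set.range (inclFiber φ hψ a) = fstMap m hψ hm ⁻¹' {mk m a} := by
  refine Set.Subset.antisymm (Set.range_subset_iff.mpr (fstMap_inclFiber hψ hm a)) ?_
  intro x hx
  obtain ⟨⟨b, f⟩, rfl⟩ := mk_surjective x
  obtain ⟨c, hc⟩ := mk_eq_mk_iff.mp hx
  refine ⟨mk ψ (f * (φ (c, 1)).2⁻¹), (mk_eq_mk_iff.mpr ⟨(c, 1), ?_⟩).symm⟩
  ext <;> simp [hc, fst_map hψ hm]

noncomputable def fiberEquiv (hψ : ∀ f, φ (1, f) = (1, ψ f)) (hm : ∀ a, (φ (a, 1)).1 = m a)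
    (hfix : ∀ c, m c = c → c = 1) {a : A} {c : ReidemeisterSet m} (h : mk m a = c) :
    {x // fstMap m hψ hm x = c} ≃ ReidemeisterSet ψ :=
  ((Equiv.ofInjective _ (inclFiber_injective hψ hm hfix a)).trans
    (Equiv.setCongr (by rw [range_inclFiber hψ hm, h]; rfl))).symm

noncomputable def prodEquiv (hψ : ∀ f, φ (1, f) = (1, ψ f)) (hm : ∀ a, (φ (a, 1)).1 = m a)
    (hfix : ∀ c, m c = c → c = 1) : ReidemeisterSet φ ≃ ReidemeisterSet m × ReidemeisterSet ψ :=
  (Equiv.sigmaFiberEquiv (fstMap m hψ hm)).symm.trans <|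
    (Equiv.sigmaCongrRight fun c => fiberEquiv hψ hm hfix (mk_surjective c).choose_spec).trans
      (Equiv.sigmaEquivProd _ _)

end ReidemeisterSet

theorem Matrix.eq_zero_of_mulVec_eq_self {n R : Type*} [Fintype n] [DecidableEq n] [CommRing R]
    [IsDomain R] {M : Matrix n n R} (hM : (1 - M).det ≠ 0) {v : n → R} (hv : M *ᵥ v = v) :
    v = 0 :=
  eq_zero_of_mulVec_eq_zero hM (by rw [sub_mulVec, one_mulVec, hv, sub_self])

namespace intMatrixReidemeisterSet

variable {r : ℕ} (M : Matrix (Fin r) (Fin r) ℤ)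

def equivReidemeisterSet :
    intMatrixReidemeisterSet M ≃ ReidemeisterSet M.mulVecLin.toAddMonoidHom.toMultiplicative :=
  Quot.congr Multiplicative.ofAdd fun v w => by
    refine Multiplicative.ofAdd.exists_congr_left.trans (exists_congr fun u => ?_)
    rw [sub_eq_add_neg, ← Multiplicative.ofAdd.apply_eq_iff_eq]
    rfl

def equivQuotientRange :
    intMatrixReidemeisterSet M ≃ (Fin r → ℤ) ⧸ LinearMap.range (toLin' (1 - M)) :=
  Quot.congrRight fun v w => by
    simp only [Submodule.quotientRel_def, LinearMap.mem_range, toLin'_apply, sub_mulVec,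
      one_mulVec]
    refine (Equiv.neg _).exists_congr_left.trans (exists_congr fun u => ?_)
    rw [Equiv.neg_symm, Equiv.neg_apply, mulVec_neg]
    constructor <;> intro h <;> linear_combination h

theorem natCard_eq_natAbs_det {r : ℕ} {M : Matrix (Fin r) (Fin r) ℤ} (hM : (1 - M).det ≠ 0) :
    Nat.card (intMatrixReidemeisterSet M) = (1 - M).det.natAbs := by
  have hinj : Injective (toLin' (1 - M)) :=
    (injective_iff_map_eq_zero _).mpr fun _ => eq_zero_of_mulVec_eq_zero hM
  rw [Nat.card_congr (equivQuotientRange M), Submodule.natCard_quotient_range_eq_natAbs_det hinj,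
    LinearMap.det_toLin']

end intMatrixReidemeisterSet

theorem reidemeister_number_direct_sum_general (r : ℕ) {F : Type*} [Group F]
    (φ : (Multiplicative (Fin r → ℤ)) × F →* (Multiplicative (Fin r → ℤ)) × F)
    (ψ : F →* F)
    (hψ : ∀ f : F, φ (1, f) = (1, ψ f))
    (M : Matrix (Fin r) (Fin r) ℤ)
    (hM : ∀ v : Fin r → ℤ,
      (φ (Multiplicative.ofAdd v, 1)).1 = Multiplicative.ofAdd (M.mulVec v))
    (hdet : (1 - M).det ≠ 0) :
    Nat.card (ReidemeisterSet φ) =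
        Nat.card (ReidemeisterSet ψ) * Nat.card (intMatrixReidemeisterSet M) ∧
      Nat.card (intMatrixReidemeisterSet M) = (1 - M).det.natAbs := by
  set m := M.mulVecLin.toAddMonoidHom.toMultiplicative
  have hm (a) : (φ (a, 1)).1 = m a := hM a.toAdd
  have hfix (c) (hc : m c = c) : c = 1 := eq_zero_of_mulVec_eq_self hdet hc
  have hprod := ReidemeisterSet.prodEquiv hψ hm hfix
  refine ⟨?_, intMatrixReidemeisterSet.natCard_eq_natAbs_det hdet⟩
  rw [Nat.card_congr hprod, Nat.card_prod, mul_comm,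
    Nat.card_congr (intMatrixReidemeisterSet.equivReidemeisterSet M)]

/-- Let `G = ℤʳ ⊕ F` with `F` a finite group, `φ : G → G` an endomorphism.
Then `φ(F) ⊆ F`; let `φ^finite = ψ : F → F` be the restriction and let `φ^∞`, given by an
integer matrix `M`, be the induced endomorphism of `G⧸F ≅ ℤʳ`. If `det(I − M) ≠ 0`, then
`R(φ) = R(φ^finite) · R(φ^∞) = R(φ^finite) · |det(I − M)|`. -/
theorem reidemeister_number_direct_sum (r : ℕ) {F : Type*} [Group F] [Finite F]
    (φ : (Multiplicative (Fin r → ℤ)) × F →* (Multiplicative (Fin r → ℤ)) × F)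
    (ψ : F →* F)
    (hψ : ∀ f : F, φ (1, f) = (1, ψ f))
    (M : Matrix (Fin r) (Fin r) ℤ)
    (hM : ∀ v : Fin r → ℤ,
      (φ (Multiplicative.ofAdd v, 1)).1 = Multiplicative.ofAdd (M.mulVec v))
    (hdet : (1 - M).det ≠ 0) :
    Nat.card (ReidemeisterSet φ) =
        Nat.card (ReidemeisterSet ψ) * Nat.card (intMatrixReidemeisterSet M) ∧
      Nat.card (intMatrixReidemeisterSet M) = (1 - M).det.natAbs :=
  reidemeister_number_direct_sum_general r φ ψ hψ M hM hdet
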